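/- arXiv:2005.12646 — 7 statements merged into one kernel-verified Lean document; each statement's English description precedes it below -/
import Mathlib

section
/- For m a positive odd integer, there exist no integers n, r with -n < r ≤ n and r dividing 4n such that 9m^2 + 4m = n^2 + r. (That is, 9m^2+4m is not of Richaud–Degert type.) -/
theorem stmt_2 (m : ℤ) (hm : 0 < m) (hodd : Odd m) :
    ¬ ∃ n r : ℤ, 1 ≤ n ∧ -n < r ∧ r ≤ n ∧ r ∣ 4 * n ∧
      9 * m ^ 2 + 4 * m = n ^ 2 + r := by
  rintro ⟨n, r, hn, h1, h2, hdvd, heq⟩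
  have h3 : 3 * m < n := by nlinarith
  have h4 : n < 3 * m + 2 := by nlinarith
  have hn1 : n = 3 * m + 1 := by omega
  subst hn1
  have hr : r = -(2 * m + 1) := by nlinarith
  subst hr
  have hd1 : (2 * m + 1) ∣ 12 * m + 4 := by
    have := (Int.neg_dvd).mp hdvd
    convert this using 1
    ring
  have hd2 : (2 * m + 1) ∣ 12 * m + 6 := ⟨6, by ring⟩
  have hd : (2 * m + 1) ∣ 2 := by
    have := dvd_sub hd2 hd1
    simpa using this
  have := Int.le_of_dvd (by norm_num) hd
  omega
end

section
/- For any positive integer c, the generalized Dedekind sum S^3(1,c) = Σ_{j=0}^{c-1} P1(j/c) * P3(j/c) equals (-c^4 + 5c^2 - 4)/(120 c^3), where P1(x) = {x} - 1/2 and P3(x) = {x}^3 - (3/2){x}^2 + (1/2){x}, with {x} the fractional part. -/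
noncomputable def P1 (x : ℝ) : ℝ := Int.fract x - 1 / 2

noncomputable def P3 (x : ℝ) : ℝ :=
  Int.fract x ^ 3 - (3 / 2) * Int.fract x ^ 2 + (1 / 2) * Int.fract x

lemma sum_pow1 (c : ℕ) : ∑ j ∈ Finset.range c, (j : ℝ) = c * (c - 1) / 2 := by
  induction c with
  | zero => simp
  | succ n ih => rw [Finset.sum_range_succ, ih]; push_cast; ring

lemma sum_pow2 (c : ℕ) : ∑ j ∈ Finset.range c, (j : ℝ) ^ 2 = c * (c - 1) * (2 * c - 1) / 6 := by
  induction c with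
  | zero => simp
  | succ n ih => rw [Finset.sum_range_succ, ih]; push_cast; ring

lemma sum_pow3 (c : ℕ) : ∑ j ∈ Finset.range c, (j : ℝ) ^ 3 = (c * (c - 1) / 2) ^ 2 := by
  induction c with
  | zero => simp
  | succ n ih => rw [Finset.sum_range_succ, ih]; push_cast; ring

lemma sum_pow4 (c : ℕ) : ∑ j ∈ Finset.range c, (j : ℝ) ^ 4
    = c * (c - 1) * (2 * c - 1) * (3 * c ^ 2 - 3 * c - 1) / 30 := by
  induction c with
  | zero => simp
  | succ n ih => rw [Finset.sum_range_succ, ih]; push_cast; ring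

theorem stmt_3 (c : ℕ) (hc : 0 < c) :
    ∑ j ∈ Finset.range c, P1 ((j : ℝ) / c) * P3 ((j : ℝ) / c)
      = (-(c : ℝ) ^ 4 + 5 * (c : ℝ) ^ 2 - 4) / (120 * (c : ℝ) ^ 3) := by
  have hc0 : (c : ℝ) ≠ 0 := Nat.cast_ne_zero.mpr hc.ne'
  have hcpos : (0 : ℝ) < c := Nat.cast_pos.mpr hc
  have key : ∀ j ∈ Finset.range c, P1 ((j : ℝ) / c) * P3 ((j : ℝ) / c)
      = (j : ℝ) ^ 4 * (1 / c ^ 4) - 2 * ((j : ℝ) ^ 3 * (1 / c ^ 3))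
        + (5 / 4) * ((j : ℝ) ^ 2 * (1 / c ^ 2)) - (1 / 4) * ((j : ℝ) * (1 / c)) := by
    intro j hj
    have hj' : (j : ℝ) < c := by
      exact_mod_cast Finset.mem_range.mp hj
    have hfr : Int.fract ((j : ℝ) / c) = (j : ℝ) / c := by
      apply Int.fract_eq_self.mpr
      constructor
      · positivity
      · rw [div_lt_one hcpos]; exact hj'
    simp only [P1, P3, hfr]
    field_simp
    ring
  rw [Finset.sum_congr rfl key]
  simp only [Finset.sum_sub_distrib, Finset.sum_add_distrib, ← Finset.mul_sum,
    ← Finset.sum_mul]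
  rw [sum_pow1, sum_pow2, sum_pow3, sum_pow4]
  field_simp
  ring
end

section
/- Let q > 3 be an integer with q ≡ 1 (mod 3). Then Σ_{k=0}^{q-1} P2(3k/(3q)) * P2((3q-3k)/(3q)) = (q^4 + 10q^2 - 6)/(180 q^3), where P2(x) = {x}^2 - {x} + 1/6. -/
noncomputable def P2 (x : ℝ) : ℝ := Int.fract x ^ 2 - Int.fract x + 1 / 6

lemma aux_sum (q : ℝ) (n : ℕ) :
    ∑ k ∈ Finset.range n, (((k : ℝ) + 1) ^ 2 - ((k : ℝ) + 1) * q + q ^ 2 / 6) ^ 2 =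
      (n : ℝ) ^ 5 / 5 + (n : ℝ) ^ 4 / 2 - (n : ℝ) ^ 4 * q / 2 + (n : ℝ) ^ 3 / 3
        - (n : ℝ) ^ 3 * q + 4 * (n : ℝ) ^ 3 * q ^ 2 / 9 - (n : ℝ) ^ 2 * q / 2
        + 2 * (n : ℝ) ^ 2 * q ^ 2 / 3 - (n : ℝ) ^ 2 * q ^ 3 / 6 - (n : ℝ) / 30
        + 2 * (n : ℝ) * q ^ 2 / 9 - (n : ℝ) * q ^ 3 / 6 + (n : ℝ) * q ^ 4 / 36 := by
  induction n with
  | zero => simp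
  | succ n ih =>
    rw [Finset.sum_range_succ, ih]
    push_cast
    ring

theorem stmt_6 (q : ℕ) (hq : 3 < q) (hmod : q % 3 = 1) :
    ∑ k ∈ Finset.range q,
        P2 ((3 * (k : ℝ)) / (3 * q)) * P2 ((3 * (q : ℝ) - 3 * k) / (3 * q))
      = ((q : ℝ) ^ 4 + 10 * (q : ℝ) ^ 2 - 6) / (180 * (q : ℝ) ^ 3) := by
  obtain ⟨n, rfl⟩ : ∃ n, q = n + 1 := ⟨q - 1, by omega⟩
  have hn1 : (0 : ℝ) < (n : ℝ) + 1 := by positivity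
  rw [Finset.sum_range_succ']
  push_cast
  have h3 : (3 * ((n : ℝ) + 1)) ≠ 0 := by positivity
  have hP0 : P2 0 = 1 / 6 := by simp [P2, Int.fract_zero]
  have hP1 : P2 1 = 1 / 6 := by simp [P2, Int.fract_one]
  have hterm : ∀ k ∈ Finset.range n,
      P2 (3 * ((k : ℝ) + 1) / (3 * ((n : ℝ) + 1))) *
        P2 ((3 * ((n : ℝ) + 1) - 3 * ((k : ℝ) + 1)) / (3 * ((n : ℝ) + 1)))
      = (((k : ℝ) + 1) ^ 2 - ((k : ℝ) + 1) * ((n : ℝ) + 1) + ((n : ℝ) + 1) ^ 2 / 6) ^ 2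
          / ((n : ℝ) + 1) ^ 4 := by
    intro k hk
    have hk' : (k : ℝ) < n := by exact_mod_cast Finset.mem_range.mp hk
    have e1 : 3 * ((k : ℝ) + 1) / (3 * ((n : ℝ) + 1)) = ((k : ℝ) + 1) / ((n : ℝ) + 1) := by
      rw [mul_div_mul_left _ _ (by norm_num : (3 : ℝ) ≠ 0)]
    have e2 : (3 * ((n : ℝ) + 1) - 3 * ((k : ℝ) + 1)) / (3 * ((n : ℝ) + 1))
        = (((n : ℝ) + 1) - ((k : ℝ) + 1)) / ((n : ℝ) + 1) := by
      rw [← mul_sub, mul_div_mul_left _ _ (by norm_num : (3 : ℝ) ≠ 0)]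
    rw [e1, e2]
    simp only [P2]
    rw [Int.fract_eq_self.mpr ⟨by positivity, by rw [div_lt_one hn1]; linarith⟩,
      Int.fract_eq_self.mpr ⟨div_nonneg (by linarith) hn1.le,
        by rw [div_lt_one hn1]; linarith⟩]
    field_simp
    ring
  rw [Finset.sum_congr rfl hterm, mul_zero, zero_div, sub_zero, div_self h3, hP0, hP1, ← Finset.sum_div, aux_sum]
  have h4 : ((n : ℝ) + 1) ≠ 0 := ne_of_gt hn1
  field_simp
  ring
end

section
/- Let q be an odd prime with q ≡ 1 (mod 3). Then the generalized Dedekind sum S^2(2q-1, 3q) = Σ_{j=0}^{3q-1} P2(j/(3q)) P2((2q-1)j/(3q)) equals (q^4 + 330q^2 - 160q - 6)/(324 · 15 · q^3). -/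
lemma P2_eq {x : ℝ} (h0 : 0 ≤ x) (h1 : x < 1) : P2 x = x ^ 2 - x + 1 / 6 := by
  unfold P2; rw [Int.fract_eq_self.2 ⟨h0, h1⟩]

lemma P2_int_add (m : ℤ) (x : ℝ) : P2 ((m : ℝ) + x) = P2 x := by
  unfold P2; rw [Int.fract_intCast_add]

lemma P2_neg (x : ℝ) : P2 (-x) = P2 x := by
  unfold P2
  rcases eq_or_ne (Int.fract x) 0 with h | h
  · rw [Int.fract_neg_eq_zero.2 h, h]
  · rw [Int.fract_neg h]; ring

lemma elem (q j D r : ℕ) (hq1 : 1 ≤ q) (hDr : (q + 1) * j = 3 * q * D + r)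
    (hr : r < 3 * q) (hj : j < 3 * q) :
    P2 ((j : ℝ) / (3 * (q : ℝ))) * P2 ((2 * (q : ℝ) - 1) * (j : ℝ) / (3 * (q : ℝ)))
      = ((j : ℝ) ^ 2 - (j : ℝ) * (3 * (q : ℝ)) + (3 * (q : ℝ)) ^ 2 / 6)
        * ((r : ℝ) ^ 2 - (r : ℝ) * (3 * (q : ℝ)) + (3 * (q : ℝ)) ^ 2 / 6) / (3 * (q : ℝ)) ^ 4 := by
  have hq0 : (0 : ℝ) < 3 * (q : ℝ) := by
    have : (1 : ℝ) ≤ (q : ℝ) := by exact_mod_cast hq1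
    linarith
  have hNne : (3 * (q : ℝ)) ≠ 0 := ne_of_gt hq0
  rw [P2_eq (by positivity) (by rw [div_lt_one hq0]; exact_mod_cast hj)]
  have e1 : (2 * (q : ℝ) - 1) * (j : ℝ) / (3 * (q : ℝ))
      = ((j : ℤ) : ℝ) + -(((q : ℝ) + 1) * (j : ℝ) / (3 * (q : ℝ))) := by
    push_cast
    field_simp
    ring
  rw [e1, P2_int_add, P2_neg]
  have h3 : ((q : ℝ) + 1) * (j : ℝ) = 3 * (q : ℝ) * (D : ℝ) + (r : ℝ) := by
    exact_mod_cast hDr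
  have e2 : ((q : ℝ) + 1) * (j : ℝ) / (3 * (q : ℝ)) = ((D : ℤ) : ℝ) + (r : ℝ) / (3 * (q : ℝ)) := by
    push_cast
    field_simp
    linear_combination h3
  rw [e2, P2_int_add, P2_eq (by positivity) (by rw [div_lt_one hq0]; exact_mod_cast hr)]
  field_simp

lemma split3 (f : ℕ → ℝ) (n : ℕ) :
    ∑ j ∈ Finset.range (3 * n), f j
      = ∑ t ∈ Finset.range n, (f (3 * t) + f (3 * t + 1) + f (3 * t + 2)) := by
  induction n with
  | zero => simp
  | succ m ih =>
    rw [show 3 * (m + 1) = 3 * m + 1 + 1 + 1 from by ring, Finset.sum_range_succ,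
      Finset.sum_range_succ, Finset.sum_range_succ, ih, Finset.sum_range_succ]
    ring

lemma faul (a b c d e D : ℝ) : ∀ n : ℕ,
    ∑ t ∈ Finset.range n,
        ((a + b * (t : ℝ) + c * (t : ℝ) ^ 2 + d * (t : ℝ) ^ 3 + e * (t : ℝ) ^ 4) / D)
      = (a * (n : ℝ) + b * ((n : ℝ) ^ 2 - (n : ℝ)) / 2
          + c * (2 * (n : ℝ) ^ 3 - 3 * (n : ℝ) ^ 2 + (n : ℝ)) / 6
          + d * ((n : ℝ) ^ 4 - 2 * (n : ℝ) ^ 3 + (n : ℝ) ^ 2) / 4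
          + e * (6 * (n : ℝ) ^ 5 - 15 * (n : ℝ) ^ 4 + 10 * (n : ℝ) ^ 3 - (n : ℝ)) / 30) / D
  | 0 => by simp
  | (n + 1) => by
    rw [Finset.sum_range_succ, faul a b c d e D n]
    push_cast
    ring

set_option maxHeartbeats 1000000 in
theorem stmt_7 (q : ℕ) (hq : q.Prime) (hodd : Odd q) (hmod : q % 3 = 1) :
    ∑ j ∈ Finset.range (3 * q),
        P2 ((j : ℝ) / (3 * q)) * P2 ((2 * (q : ℝ) - 1) * j / (3 * q))
      = ((q : ℝ) ^ 4 + 330 * (q : ℝ) ^ 2 - 160 * (q : ℝ) - 6)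
          / (324 * 15 * (q : ℝ) ^ 3) := by
  obtain ⟨k, hk⟩ : ∃ k, q = 3 * k + 1 := ⟨q / 3, by omega⟩
  have hq1 : 1 ≤ q := hq.one_lt.le
  have hqr : (q : ℝ) = 3 * (k : ℝ) + 1 := by rw [hk]; push_cast; ring
  have hne : (3 * (k : ℝ) + 1) ≠ 0 := by positivity
  rw [split3 (fun j : ℕ => P2 ((j : ℝ) / (3 * (q : ℝ)))
      * P2 ((2 * (q : ℝ) - 1) * (j : ℝ) / (3 * (q : ℝ)))) q]
  rw [Finset.sum_add_distrib, Finset.sum_add_distrib]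
  have hA : ∑ t ∈ Finset.range q,
      P2 (((3 * t : ℕ) : ℝ) / (3 * (q : ℝ)))
        * P2 ((2 * (q : ℝ) - 1) * ((3 * t : ℕ) : ℝ) / (3 * (q : ℝ)))
      = ((9/4) + (783/20) * (k : ℝ) + 162 * (k : ℝ) ^ 2 + 243 * (k : ℝ) ^ 3
          + (729/4) * (k : ℝ) ^ 4 + (2187/20) * (k : ℝ) ^ 5) / (3 * (q : ℝ)) ^ 4 := by
    have e : ∀ t ∈ Finset.range q,
        P2 (((3 * t : ℕ) : ℝ) / (3 * (q : ℝ)))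
          * P2 ((2 * (q : ℝ) - 1) * ((3 * t : ℕ) : ℝ) / (3 * (q : ℝ)))
        = (((9/4) + 27 * (k : ℝ) + (243/2) * (k : ℝ) ^ 2 + 243 * (k : ℝ) ^ 3 + (729/4) * (k : ℝ) ^ 4)
            + ((-27) - 243 * (k : ℝ) - 729 * (k : ℝ) ^ 2 - 729 * (k : ℝ) ^ 3) * (t : ℝ)
            + (108 + 648 * (k : ℝ) + 972 * (k : ℝ) ^ 2) * (t : ℝ) ^ 2
            + ((-162) - 486 * (k : ℝ)) * (t : ℝ) ^ 3
            + (81 : ℝ) * (t : ℝ) ^ 4) / (3 * (q : ℝ)) ^ 4 := by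
      intro t ht
      have ht' : t < q := Finset.mem_range.1 ht
      rw [elem q (3 * t) t (3 * t) hq1 (by ring) (by omega) (by omega)]
      push_cast [hqr]
      ring
    rw [Finset.sum_congr rfl e, faul, hqr]
    ring
  have hB : ∑ t ∈ Finset.range q,
      P2 (((3 * t + 1 : ℕ) : ℝ) / (3 * (q : ℝ)))
        * P2 ((2 * (q : ℝ) - 1) * ((3 * t + 1 : ℕ) : ℝ) / (3 * (q : ℝ)))
      = ((1/4) - (57/20) * (k : ℝ) - 18 * (k : ℝ) ^ 2 - 45 * (k : ℝ) ^ 3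
          - (351/4) * (k : ℝ) ^ 4 - (1053/20) * (k : ℝ) ^ 5) / (3 * (q : ℝ)) ^ 4 := by
    have e1 : ∀ t ∈ Finset.range (2 * k + 1),
        P2 (((3 * t + 1 : ℕ) : ℝ) / (3 * (q : ℝ)))
          * P2 ((2 * (q : ℝ) - 1) * ((3 * t + 1 : ℕ) : ℝ) / (3 * (q : ℝ)))
        = (((1/4) + 3 * (k : ℝ) - (9/2) * (k : ℝ) ^ 2 - 81 * (k : ℝ) ^ 3 - (243/4) * (k : ℝ) ^ 4)
            + (36 * (k : ℝ) + 216 * (k : ℝ) ^ 2) * (t : ℝ)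
            + ((-18) - 108 * (k : ℝ) + 324 * (k : ℝ) ^ 2) * (t : ℝ) ^ 2
            + ((-324) * (k : ℝ)) * (t : ℝ) ^ 3
            + (81 : ℝ) * (t : ℝ) ^ 4) / (3 * (q : ℝ)) ^ 4 := by
      intro t ht
      have ht' : t < 2 * k + 1 := Finset.mem_range.1 ht
      rw [elem q (3 * t + 1) t (3 * t + q + 1) hq1 (by ring) (by omega) (by omega)]
      push_cast [hqr]
      ring
    have e2 : ∀ s ∈ Finset.range k,
        P2 (((3 * (2 * k + 1 + s) + 1 : ℕ) : ℝ) / (3 * (q : ℝ)))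
          * P2 ((2 * (q : ℝ) - 1) * ((3 * (2 * k + 1 + s) + 1 : ℕ) : ℝ) / (3 * (q : ℝ)))
        = ((((-11)/4) - 51 * (k : ℝ) + (99/2) * (k : ℝ) ^ 2 + 81 * (k : ℝ) ^ 3 - (243/4) * (k : ℝ) ^ 4)
            + (9 - 279 * (k : ℝ) + 27 * (k : ℝ) ^ 2 + 243 * (k : ℝ) ^ 3) * (s : ℝ)
            + (90 - 432 * (k : ℝ) - 162 * (k : ℝ) ^ 2) * (s : ℝ) ^ 2
            + (162 - 162 * (k : ℝ)) * (s : ℝ) ^ 3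
            + (81 : ℝ) * (s : ℝ) ^ 4) / (3 * (q : ℝ)) ^ 4 := by
      intro s hs
      have hs' : s < k := Finset.mem_range.1 hs
      rw [elem q (3 * (2 * k + 1 + s) + 1) (2 * k + 2 + s) (3 * s + 2) hq1
        (by subst hk; ring) (by omega) (by omega)]
      push_cast [hqr]
      ring
    have hrange : Finset.range q = Finset.range (2 * k + 1 + k) := by
      rw [show q = 2 * k + 1 + k from by omega]
    rw [hrange, Finset.sum_range_add, Finset.sum_congr rfl e1, Finset.sum_congr rfl e2,
      faul, faul, hqr]
    push_cast
    ring
  have hC : ∑ t ∈ Finset.range q,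
      P2 (((3 * t + 2 : ℕ) : ℝ) / (3 * (q : ℝ)))
        * P2 ((2 * (q : ℝ) - 1) * ((3 * t + 2 : ℕ) : ℝ) / (3 * (q : ℝ)))
      = ((1/4) - (57/20) * (k : ℝ) - 18 * (k : ℝ) ^ 2 - 45 * (k : ℝ) ^ 3
          - (351/4) * (k : ℝ) ^ 4 - (1053/20) * (k : ℝ) ^ 5) / (3 * (q : ℝ)) ^ 4 := by
    have e1 : ∀ t ∈ Finset.range k,
        P2 (((3 * t + 2 : ℕ) : ℝ) / (3 * (q : ℝ)))
          * P2 ((2 * (q : ℝ) - 1) * ((3 * t + 2 : ℕ) : ℝ) / (3 * (q : ℝ)))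
        = ((((-11)/4) - 51 * (k : ℝ) + (99/2) * (k : ℝ) ^ 2 + 81 * (k : ℝ) ^ 3 - (243/4) * (k : ℝ) ^ 4)
            + (9 - 279 * (k : ℝ) + 27 * (k : ℝ) ^ 2 + 243 * (k : ℝ) ^ 3) * (t : ℝ)
            + (90 - 432 * (k : ℝ) - 162 * (k : ℝ) ^ 2) * (t : ℝ) ^ 2
            + (162 - 162 * (k : ℝ)) * (t : ℝ) ^ 3
            + (81 : ℝ) * (t : ℝ) ^ 4) / (3 * (q : ℝ)) ^ 4 := by
      intro t ht
      have ht' : t < k := Finset.mem_range.1 ht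
      rw [elem q (3 * t + 2) t (3 * t + 2 * q + 2) hq1 (by ring) (by omega) (by omega)]
      push_cast [hqr]
      ring
    have e2 : ∀ s ∈ Finset.range (2 * k + 1),
        P2 (((3 * (k + s) + 2 : ℕ) : ℝ) / (3 * (q : ℝ)))
          * P2 ((2 * (q : ℝ) - 1) * ((3 * (k + s) + 2 : ℕ) : ℝ) / (3 * (q : ℝ)))
        = (((1/4) + 3 * (k : ℝ) - (9/2) * (k : ℝ) ^ 2 - 81 * (k : ℝ) ^ 3 - (243/4) * (k : ℝ) ^ 4)
            + (36 * (k : ℝ) + 216 * (k : ℝ) ^ 2) * (s : ℝ)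
            + ((-18) - 108 * (k : ℝ) + 324 * (k : ℝ) ^ 2) * (s : ℝ) ^ 2
            + ((-324) * (k : ℝ)) * (s : ℝ) ^ 3
            + (81 : ℝ) * (s : ℝ) ^ 4) / (3 * (q : ℝ)) ^ 4 := by
      intro s hs
      have hs' : s < 2 * k + 1 := Finset.mem_range.1 hs
      rw [elem q (3 * (k + s) + 2) (k + s + 1) (3 * s + 1) hq1
        (by subst hk; ring) (by omega) (by omega)]
      push_cast [hqr]
      ring
    have hrange : Finset.range q = Finset.range (k + (2 * k + 1)) := by
      rw [show q = k + (2 * k + 1) from by omega]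
    rw [hrange, Finset.sum_range_add, Finset.sum_congr rfl e1, Finset.sum_congr rfl e2,
      faul, faul, hqr]
    push_cast
    ring
  rw [hA, hB, hC, hqr]
  field_simp
  ring
end

section
/- Let q be an odd prime with q ≡ 1 (mod 3). Then the generalized Dedekind sum S^3(2q-1, 3q) = Σ_{j=0}^{3q-1} P1(j/(3q)) P3((2q-1)j/(3q)) equals (q^4 + 40q^3 - 165q^2 + 80q + 4)/(3240 q^3). -/
lemma P1_div (a b : ℝ) (hb : 0 < b) (h0 : 0 ≤ a) (h1 : a < b) : P1 (a/b) = a/b - 1/2 := by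
  rw [P1, Int.fract_eq_self.mpr ⟨div_nonneg h0 hb.le, (div_lt_one hb).mpr h1⟩]

lemma P3_div (x a b : ℝ) (z : ℤ) (hb : 0 < b) (h0 : 0 ≤ a) (h1 : a < b)
    (hx : x = z + a/b) :
    P3 x = (a/b)^3 - 3/2*(a/b)^2 + 1/2*(a/b) := by
  subst hx
  rw [P3, Int.fract_intCast_add, Int.fract_eq_self.mpr ⟨div_nonneg h0 hb.le, (div_lt_one hb).mpr h1⟩]

lemma sum_range_triple (f : ℕ → ℝ) (n : ℕ) :
    ∑ j ∈ Finset.range (3*n), f j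
      = ∑ k ∈ Finset.range n, (f (3*k) + f (3*k+1) + f (3*k+2)) := by
  induction n with
  | zero => simp
  | succ n ih =>
    rw [show 3*(n+1) = 3*n+1+1+1 from by ring, Finset.sum_range_succ, Finset.sum_range_succ,
      Finset.sum_range_succ, ih, Finset.sum_range_succ]
    have e : 3*n+1+1 = 3*n+2 := by omega
    rw [e]
    ring

lemma sum_range_split (f : ℕ → ℝ) (b n : ℕ) (h : b ≤ n) :
    ∑ k ∈ Finset.range n, f k
      = ∑ k ∈ Finset.range b, f k + ∑ k ∈ Finset.range (n-b), f (b+k) := by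
  have h2 := Finset.sum_range_add f b (n-b)
  rwa [Nat.add_sub_cancel' h] at h2

lemma sumA (M : ℝ) (hQ : (3*M+1) ≠ 0) (N : ℕ) :
    ∑ k ∈ Finset.range N, ((((3*(k:ℝ)))/(9*M+3)) - 1/2) * ((((9*M+3-3*(k:ℝ)))/(9*M+3))^3 - 3/2*(((9*M+3-3*(k:ℝ)))/(9*M+3))^2 + 1/2*(((9*M+3-3*(k:ℝ)))/(9*M+3)))
    = ((-243/10)*(N:ℝ) + (405/4)*(N:ℝ)^2 - (567/4)*(N:ℝ)^3 + 81*(N:ℝ)^4 - (81/5)*(N:ℝ)^5 - (1539/8)*M*(N:ℝ) + (4131/8)*M*(N:ℝ)^2 - (891/2)*M*(N:ℝ)^3 + (243/2)*M*(N:ℝ)^4 - (1701/4)*M^2*(N:ℝ) + 729*M^2*(N:ℝ)^2 - (1215/4)*M^2*(N:ℝ)^3 - (2187/8)*M^3*(N:ℝ) + (2187/8)*M^3*(N:ℝ)^2) / (81*(3*M+1)^4) := by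
  have hD : (9*M+3 : ℝ) ≠ 0 := by intro h; apply hQ; linarith
  induction N with
  | zero => norm_num
  | succ n ih =>
    rw [Finset.sum_range_succ, ih]
    push_cast
    obtain ⟨t, rfl⟩ : ∃ t, M = (t-1)/3 := ⟨3*M+1, by ring⟩
    rw [show (9*((t-1)/3)+3 : ℝ) = 3*t by ring, show (3*((t-1)/3)+1 : ℝ) = t by ring] at *
    field_simp
    ring

lemma sumB1 (M : ℝ) (hQ : (3*M+1) ≠ 0) (N : ℕ) :
    ∑ k ∈ Finset.range N, ((((3*(k:ℝ)+1))/(9*M+3)) - 1/2) * ((((6*M+1-3*(k:ℝ)))/(9*M+3))^3 - 3/2*(((6*M+1-3*(k:ℝ)))/(9*M+3))^2 + 1/2*(((6*M+1-3*(k:ℝ)))/(9*M+3)))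
    = ((26/5)*(N:ℝ) - (33/2)*(N:ℝ)^2 - (27/4)*(N:ℝ)^3 + (135/4)*(N:ℝ)^4 - (81/5)*(N:ℝ)^5 + (351/8)*M*(N:ℝ) - (459/8)*M*(N:ℝ)^2 - 54*M*(N:ℝ)^3 + (243/4)*M*(N:ℝ)^4 + (513/4)*M^2*(N:ℝ) - (243/2)*M^2*(N:ℝ)^2 - (81/4)*M^2*(N:ℝ)^3 + (1647/8)*M^3*(N:ℝ) - (1053/8)*M^3*(N:ℝ)^2 + (243/2)*M^4*(N:ℝ)) / (81*(3*M+1)^4) := by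
  have hD : (9*M+3 : ℝ) ≠ 0 := by intro h; apply hQ; linarith
  induction N with
  | zero => norm_num
  | succ n ih =>
    rw [Finset.sum_range_succ, ih]
    push_cast
    obtain ⟨t, rfl⟩ : ∃ t, M = (t-1)/3 := ⟨3*M+1, by ring⟩
    rw [show (9*((t-1)/3)+3 : ℝ) = 3*t by ring, show (3*((t-1)/3)+1 : ℝ) = t by ring] at *
    field_simp
    ring

lemma sumB2 (M : ℝ) (hQ : (3*M+1) ≠ 0) (N : ℕ) :
    ∑ k ∈ Finset.range N, ((((3*(k:ℝ)+6*M+4))/(9*M+3)) - 1/2) * ((((9*M+1-3*(k:ℝ)))/(9*M+3))^3 - 3/2*(((9*M+1-3*(k:ℝ)))/(9*M+3))^2 + 1/2*(((9*M+1-3*(k:ℝ)))/(9*M+3)))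
    = ((-53/10)*(N:ℝ) - (39/4)*(N:ℝ)^2 + (81/4)*(N:ℝ)^3 + (27/2)*(N:ℝ)^4 - (81/5)*(N:ℝ)^5 - (123/8)*M*(N:ℝ) - (621/8)*M*(N:ℝ)^2 + (27/2)*M*(N:ℝ)^3 + 81*M*(N:ℝ)^4 - (81/4)*M^2*(N:ℝ) - (243/2)*M^2*(N:ℝ)^2 - (243/4)*M^2*(N:ℝ)^3 - (243/8)*M^3*(N:ℝ) - (729/8)*M^3*(N:ℝ)^2) / (81*(3*M+1)^4) := by
  have hD : (9*M+3 : ℝ) ≠ 0 := by intro h; apply hQ; linarith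
  induction N with
  | zero => norm_num
  | succ n ih =>
    rw [Finset.sum_range_succ, ih]
    push_cast
    obtain ⟨t, rfl⟩ : ∃ t, M = (t-1)/3 := ⟨3*M+1, by ring⟩
    rw [show (9*((t-1)/3)+3 : ℝ) = 3*t by ring, show (3*((t-1)/3)+1 : ℝ) = t by ring] at *
    field_simp
    ring

lemma sumC1 (M : ℝ) (hQ : (3*M+1) ≠ 0) (N : ℕ) :
    ∑ k ∈ Finset.range N, ((((3*(k:ℝ)+2))/(9*M+3)) - 1/2) * ((((3*M-1-3*(k:ℝ)))/(9*M+3))^3 - 3/2*(((3*M-1-3*(k:ℝ)))/(9*M+3))^2 + 1/2*(((3*M-1-3*(k:ℝ)))/(9*M+3)))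
    = ((-53/10)*(N:ℝ) + (39/4)*(N:ℝ)^2 + (81/4)*(N:ℝ)^3 - (27/2)*(N:ℝ)^4 - (81/5)*(N:ℝ)^5 - (279/8)*M*(N:ℝ) + (135/8)*M*(N:ℝ)^2 + (135/2)*M*(N:ℝ)^3 - (459/4)*M^2*(N:ℝ) + (405/4)*M^2*(N:ℝ)^3 - (1431/8)*M^3*(N:ℝ) - (405/8)*M^3*(N:ℝ)^2 - (243/2)*M^4*(N:ℝ)) / (81*(3*M+1)^4) := by
  have hD : (9*M+3 : ℝ) ≠ 0 := by intro h; apply hQ; linarith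
  induction N with
  | zero => norm_num
  | succ n ih =>
    rw [Finset.sum_range_succ, ih]
    push_cast
    obtain ⟨t, rfl⟩ : ∃ t, M = (t-1)/3 := ⟨3*M+1, by ring⟩
    rw [show (9*((t-1)/3)+3 : ℝ) = 3*t by ring, show (3*((t-1)/3)+1 : ℝ) = t by ring] at *
    field_simp
    ring

lemma sumC2 (M : ℝ) (hQ : (3*M+1) ≠ 0) (N : ℕ) :
    ∑ k ∈ Finset.range N, ((((3*(k:ℝ)+3*M+2))/(9*M+3)) - 1/2) * ((((9*M+2-3*(k:ℝ)))/(9*M+3))^3 - 3/2*(((9*M+2-3*(k:ℝ)))/(9*M+3))^2 + 1/2*(((9*M+2-3*(k:ℝ)))/(9*M+3)))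
    = ((119/20)*(N:ℝ) - (15/4)*(N:ℝ)^2 - (135/4)*(N:ℝ)^3 + (189/4)*(N:ℝ)^4 - (81/5)*(N:ℝ)^5 + (201/8)*M*(N:ℝ) + (459/8)*M*(N:ℝ)^2 - 189*M*(N:ℝ)^3 + (405/4)*M*(N:ℝ)^4 + (729/4)*M^2*(N:ℝ)^2 - (729/4)*M^2*(N:ℝ)^3 - (243/8)*M^3*(N:ℝ) + (729/8)*M^3*(N:ℝ)^2) / (81*(3*M+1)^4) := by
  have hD : (9*M+3 : ℝ) ≠ 0 := by intro h; apply hQ; linarith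
  induction N with
  | zero => norm_num
  | succ n ih =>
    rw [Finset.sum_range_succ, ih]
    push_cast
    obtain ⟨t, rfl⟩ : ∃ t, M = (t-1)/3 := ⟨3*M+1, by ring⟩
    rw [show (9*((t-1)/3)+3 : ℝ) = 3*t by ring, show (3*((t-1)/3)+1 : ℝ) = t by ring] at *
    field_simp
    ring

set_option maxHeartbeats 2000000 in
theorem stmt_8 (q : ℕ) (hq : q.Prime) (hodd : Odd q) (hmod : q % 3 = 1) :
    ∑ j ∈ Finset.range (3 * q),
        P1 ((j : ℝ) / (3 * q)) * P3 ((2 * (q : ℝ) - 1) * j / (3 * q))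
      = ((q : ℝ) ^ 4 + 40 * (q : ℝ) ^ 3 - 165 * (q : ℝ) ^ 2 + 80 * (q : ℝ) + 4)
          / (3240 * (q : ℝ) ^ 3) := by
  obtain ⟨m, hm⟩ : ∃ m, q = 3*m+1 := ⟨q/3, by omega⟩
  have hM0 : (0:ℝ) ≤ (m:ℝ) := Nat.cast_nonneg m
  have hq' : (q:ℝ) = 3*(m:ℝ)+1 := by rw [hm]; push_cast; ring
  have hQpos : (0:ℝ) < 3*(m:ℝ)+1 := by linarith
  have hQ : (3*(m:ℝ)+1 : ℝ) ≠ 0 := ne_of_gt hQpos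
  have hD : (9*(m:ℝ)+3 : ℝ) ≠ 0 := by intro h; apply hQ; linarith
  have hb : (0:ℝ) < 3*(q:ℝ) := by rw [hq']; linarith
  have hb9 : 3*(q:ℝ) = 9*(m:ℝ)+3 := by rw [hq']; ring
  have hA : ∑ k ∈ Finset.range q, P1 ((↑(3*k) : ℝ) / (3*↑q)) * P3 ((2*(q:ℝ)-1) * ↑(3*k) / (3*↑q))
      = ((-243/10)*(q:ℝ) + (405/4)*(q:ℝ)^2 - (567/4)*(q:ℝ)^3 + 81*(q:ℝ)^4 - (81/5)*(q:ℝ)^5 - (1539/8)*(m:ℝ)*(q:ℝ) + (4131/8)*(m:ℝ)*(q:ℝ)^2 - (891/2)*(m:ℝ)*(q:ℝ)^3 + (243/2)*(m:ℝ)*(q:ℝ)^4 - (1701/4)*(m:ℝ)^2*(q:ℝ) + 729*(m:ℝ)^2*(q:ℝ)^2 - (1215/4)*(m:ℝ)^2*(q:ℝ)^3 - (2187/8)*(m:ℝ)^3*(q:ℝ) + (2187/8)*(m:ℝ)^3*(q:ℝ)^2) / (81*(3*(m:ℝ)+1)^4) := by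
    refine (Finset.sum_congr rfl ?_).trans (sumA (m:ℝ) hQ q)
    intro k hk
    have hkq : k < q := Finset.mem_range.mp hk
    have hkq' : (k:ℝ) < (q:ℝ) := by exact_mod_cast hkq
    have hk0 : (0:ℝ) ≤ (k:ℝ) := Nat.cast_nonneg k
    rcases Nat.eq_zero_or_pos k with rfl | hk1
    · have e0 : ((9:ℝ)*(m:ℝ)+3)/(9*(m:ℝ)+3) = 1 := div_self hD
      norm_num [P1, P3, Int.fract_zero, e0]
    · have hk1' : (1:ℝ) ≤ (k:ℝ) := by exact_mod_cast hk1
      rw [show ((↑(3*k):ℝ) / (3*↑q)) = (3*(k:ℝ))/(3*(q:ℝ)) from by push_cast; ring_nf]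
      rw [P1_div (3*(k:ℝ)) (3*(q:ℝ)) hb (by linarith) (by linarith)]
      rw [P3_div _ (3*(q:ℝ)-3*(k:ℝ)) (3*(q:ℝ)) (2*(k:ℤ)-1) hb (by linarith) (by linarith)
        (by rw [hq']; push_cast; field_simp; ring)]
      rw [hb9]
  have hB : ∑ k ∈ Finset.range q, P1 ((↑(3*k+1) : ℝ) / (3*↑q)) * P3 ((2*(q:ℝ)-1) * ↑(3*k+1) / (3*↑q))
      = ((26/5)*((2*m+1 : ℕ):ℝ) - (33/2)*((2*m+1 : ℕ):ℝ)^2 - (27/4)*((2*m+1 : ℕ):ℝ)^3 + (135/4)*((2*m+1 : ℕ):ℝ)^4 - (81/5)*((2*m+1 : ℕ):ℝ)^5 + (351/8)*(m:ℝ)*((2*m+1 : ℕ):ℝ) - (459/8)*(m:ℝ)*((2*m+1 : ℕ):ℝ)^2 - 54*(m:ℝ)*((2*m+1 : ℕ):ℝ)^3 + (243/4)*(m:ℝ)*((2*m+1 : ℕ):ℝ)^4 + (513/4)*(m:ℝ)^2*((2*m+1 : ℕ):ℝ) - (243/2)*(m:ℝ)^2*((2*m+1 : ℕ):ℝ)^2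 - (81/4)*(m:ℝ)^2*((2*m+1 : ℕ):ℝ)^3 + (1647/8)*(m:ℝ)^3*((2*m+1 : ℕ):ℝ) - (1053/8)*(m:ℝ)^3*((2*m+1 : ℕ):ℝ)^2 + (243/2)*(m:ℝ)^4*((2*m+1 : ℕ):ℝ)) / (81*(3*(m:ℝ)+1)^4) + ((-53/10)*((m : ℕ):ℝ) - (39/4)*((m : ℕ):ℝ)^2 + (81/4)*((m : ℕ):ℝ)^3 + (27/2)*((m : ℕ):ℝ)^4 - (81/5)*((m : ℕ):ℝ)^5 - (123/8)*(m:ℝ)*((m : ℕ):ℝ) - (621/8)*(m:ℝ)*((m : ℕ):ℝ)^2 + (27/2)*(m:ℝ)*((m : ℕ):ℝ)^3 + 81*(m:ℝ)*((m : ℕ):ℝ)^4 - (81/4)*(m:ℝ)^2*((m : ℕ):ℝ) - (243/2)*(m:ℝ)^2*((m : ℕ):ℝ)^2 - (243/4)*(m:ℝ)^2*((m : ℕ):ℝ)^3 - (243/8)*(m:ℝ)^3*((m : ℕ):ℝ) - (729/8)*(m:ℝ)^3*((m : ℕ):ℝ)^2) / (81*(3*(m:ℝ)+1)^4) := by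
    rw [sum_range_split _ (2*m+1) q (by omega), show q - (2*m+1) = m from by omega]
    congr 1
    · refine (Finset.sum_congr rfl ?_).trans (sumB1 (m:ℝ) hQ (2*m+1))
      intro k hk
      have hkq : k < 2*m+1 := Finset.mem_range.mp hk
      have hkq' : (k:ℝ) ≤ 2*(m:ℝ) := by exact_mod_cast Nat.lt_succ_iff.mp hkq
      have hk0 : (0:ℝ) ≤ (k:ℝ) := Nat.cast_nonneg k
      rw [show ((↑(3*k+1):ℝ) / (3*↑q)) = (3*(k:ℝ)+1)/(3*(q:ℝ)) from by push_cast; ring_nf]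
      rw [P1_div (3*(k:ℝ)+1) (3*(q:ℝ)) hb (by linarith) (by rw [hq']; linarith)]
      rw [P3_div _ (6*(m:ℝ)+1-3*(k:ℝ)) (3*(q:ℝ)) (2*(k:ℤ)) hb (by linarith) (by rw [hq']; linarith)
        (by rw [hq']; push_cast; field_simp; ring)]
      rw [hb9]
    · refine (Finset.sum_congr rfl ?_).trans (sumB2 (m:ℝ) hQ m)
      intro k hk
      have hkq : k < m := Finset.mem_range.mp hk
      have hkq' : (k:ℝ) ≤ (m:ℝ) - 1 := by
        have h3 : (k:ℝ) + 1 ≤ (m:ℝ) := by exact_mod_cast Nat.succ_le_of_lt hkq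
        linarith
      have hk0 : (0:ℝ) ≤ (k:ℝ) := Nat.cast_nonneg k
      rw [show ((↑(3*(2*m+1+k)+1):ℝ) / (3*↑q)) = (3*(k:ℝ)+6*(m:ℝ)+4)/(3*(q:ℝ)) from by
        push_cast; ring_nf]
      rw [P1_div (3*(k:ℝ)+6*(m:ℝ)+4) (3*(q:ℝ)) hb (by linarith) (by rw [hq']; linarith)]
      rw [P3_div _ (9*(m:ℝ)+1-3*(k:ℝ)) (3*(q:ℝ)) (2*(k:ℤ)+4*(m:ℤ)+1) hb (by linarith) (by rw [hq']; linarith)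
        (by rw [hq']; push_cast; field_simp; ring)]
      rw [hb9]
  have hC : ∑ k ∈ Finset.range q, P1 ((↑(3*k+2) : ℝ) / (3*↑q)) * P3 ((2*(q:ℝ)-1) * ↑(3*k+2) / (3*↑q))
      = ((-53/10)*((m : ℕ):ℝ) + (39/4)*((m : ℕ):ℝ)^2 + (81/4)*((m : ℕ):ℝ)^3 - (27/2)*((m : ℕ):ℝ)^4 - (81/5)*((m : ℕ):ℝ)^5 - (279/8)*(m:ℝ)*((m : ℕ):ℝ) + (135/8)*(m:ℝ)*((m : ℕ):ℝ)^2 + (135/2)*(m:ℝ)*((m : ℕ):ℝ)^3 - (459/4)*(m:ℝ)^2*((m : ℕ):ℝ) + (405/4)*(m:ℝ)^2*((m : ℕ):ℝ)^3 - (1431/8)*(m:ℝ)^3*((m : ℕ):ℝ) - (405/8)*(m:ℝ)^3*((m : ℕ):ℝ)^2 - (243/2)*(m:ℝ)^4*((m : ℕ):ℝ)) / (81*(3*(m:ℝ)+1)^4) + ((119/20)*((2*m+1 : ℕ):ℝ) - (15/4)*((2*m+1 : ℕ):ℝ)^2 - (135/4)*((2*m+1 : ℕ):ℝ)^3 + (189/4)*((2*m+1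 : ℕ):ℝ)^4 - (81/5)*((2*m+1 : ℕ):ℝ)^5 + (201/8)*(m:ℝ)*((2*m+1 : ℕ):ℝ) + (459/8)*(m:ℝ)*((2*m+1 : ℕ):ℝ)^2 - 189*(m:ℝ)*((2*m+1 : ℕ):ℝ)^3 + (405/4)*(m:ℝ)*((2*m+1 : ℕ):ℝ)^4 + (729/4)*(m:ℝ)^2*((2*m+1 : ℕ):ℝ)^2 - (729/4)*(m:ℝ)^2*((2*m+1 : ℕ):ℝ)^3 - (243/8)*(m:ℝ)^3*((2*m+1 : ℕ):ℝ) + (729/8)*(m:ℝ)^3*((2*m+1 : ℕ):ℝ)^2) / (81*(3*(m:ℝ)+1)^4) := by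
    rw [sum_range_split _ m q (by omega), show q - m = 2*m+1 from by omega]
    congr 1
    · refine (Finset.sum_congr rfl ?_).trans (sumC1 (m:ℝ) hQ m)
      intro k hk
      have hkq : k < m := Finset.mem_range.mp hk
      have hkq' : (k:ℝ) ≤ (m:ℝ) - 1 := by
        have h3 : (k:ℝ) + 1 ≤ (m:ℝ) := by exact_mod_cast Nat.succ_le_of_lt hkq
        linarith
      have hk0 : (0:ℝ) ≤ (k:ℝ) := Nat.cast_nonneg k
      rw [show ((↑(3*k+2):ℝ) / (3*↑q)) = (3*(k:ℝ)+2)/(3*(q:ℝ)) from by push_cast; ring_nf]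
      rw [P1_div (3*(k:ℝ)+2) (3*(q:ℝ)) hb (by linarith) (by rw [hq']; linarith)]
      rw [P3_div _ (3*(m:ℝ)-1-3*(k:ℝ)) (3*(q:ℝ)) (2*(k:ℤ)+1) hb (by linarith) (by rw [hq']; linarith)
        (by rw [hq']; push_cast; field_simp; ring)]
      rw [hb9]
    · refine (Finset.sum_congr rfl ?_).trans (sumC2 (m:ℝ) hQ (2*m+1))
      intro k hk
      have hkq : k < 2*m+1 := Finset.mem_range.mp hk
      have hkq' : (k:ℝ) ≤ 2*(m:ℝ) := by exact_mod_cast Nat.lt_succ_iff.mp hkq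
      have hk0 : (0:ℝ) ≤ (k:ℝ) := Nat.cast_nonneg k
      rw [show ((↑(3*(m+k)+2):ℝ) / (3*↑q)) = (3*(k:ℝ)+3*(m:ℝ)+2)/(3*(q:ℝ)) from by
        push_cast; ring_nf]
      rw [P1_div (3*(k:ℝ)+3*(m:ℝ)+2) (3*(q:ℝ)) hb (by linarith) (by rw [hq']; linarith)]
      rw [P3_div _ (9*(m:ℝ)+2-3*(k:ℝ)) (3*(q:ℝ)) (2*(k:ℤ)+2*(m:ℤ)) hb (by linarith) (by rw [hq']; linarith)
        (by rw [hq']; push_cast; field_simp; ring)]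
      rw [hb9]
  rw [sum_range_triple, Finset.sum_add_distrib, Finset.sum_add_distrib, hA, hB, hC, hq']
  push_cast
  field_simp
  ring
end

section
/- Let m be a positive odd integer with m ≡ 1 (mod 3). Then for every integer s with s ≢ 0 (mod 3), 3 divides -s^2 + 3ms + m, and moreover 2 * Σ_{0 ≤ s ≤ (3m-1)/2, 3∤s} (3 + (m(1+3s) - s^2)/3) = m^3 + (2m^2)/3 + (19m)/3. -/
lemma peel (b : ℤ) (h : (0:ℤ) ≤ b + 1) (f : ℤ → ℚ) :
    ∑ i ∈ Finset.Icc (0:ℤ) (b+1), f i = (∑ i ∈ Finset.Icc (0:ℤ) b, f i) + f (b+1) := by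
  have : Finset.Icc (0:ℤ) (b+1) = insert (b+1) (Finset.Icc 0 b) := by
    ext x; simp [Finset.mem_Icc, Finset.mem_insert]; omega
  rw [this, Finset.sum_insert (by simp), add_comm]

lemma aux (a b c : ℚ) (k : ℕ) :
    ∑ s ∈ Finset.Icc (0:ℤ) (9*(k:ℤ)+1),
        (if ¬ (3 ∣ s) then a + b*(s:ℚ) + c*(s:ℚ)^2 else 0)
      = a*(6*(k:ℚ)+1) + b*(27*(k:ℚ)^2+9*k+1) + c*((6*(k:ℚ)+1)*(27*(k:ℚ)^2+9*k+1)) := by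
  induction k with
  | zero =>
      rw [show (9*((0:ℕ):ℤ)+1) = 0+1 by norm_num, peel _ (by norm_num)]
      rw [show Finset.Icc (0:ℤ) 0 = {0} from Finset.Icc_self 0, Finset.sum_singleton]
      norm_num
  | succ k ih =>
      have hk : (0:ℤ) ≤ (k:ℤ) := Int.natCast_nonneg k
      rw [show 9*(((k:ℕ)+1:ℕ):ℤ)+1 = (9*(k:ℤ)+9)+1 by push_cast; ring, peel _ (by omega)]
      rw [show 9*(k:ℤ)+9 = (9*(k:ℤ)+8)+1 by ring, peel _ (by omega)]
      rw [show 9*(k:ℤ)+8 = (9*(k:ℤ)+7)+1 by ring, peel _ (by omega)]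
      rw [show 9*(k:ℤ)+7 = (9*(k:ℤ)+6)+1 by ring, peel _ (by omega)]
      rw [show 9*(k:ℤ)+6 = (9*(k:ℤ)+5)+1 by ring, peel _ (by omega)]
      rw [show 9*(k:ℤ)+5 = (9*(k:ℤ)+4)+1 by ring, peel _ (by omega)]
      rw [show 9*(k:ℤ)+4 = (9*(k:ℤ)+3)+1 by ring, peel _ (by omega)]
      rw [show 9*(k:ℤ)+3 = (9*(k:ℤ)+2)+1 by ring, peel _ (by omega)]
      rw [show 9*(k:ℤ)+2 = (9*(k:ℤ)+1)+1 by ring, peel _ (by omega)]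
      rw [ih]
      rw [if_pos (show ¬ ((3:ℤ) ∣ (9*(k:ℤ)+1+1)) by omega)]
      rw [if_neg (not_not_intro (show (3:ℤ) ∣ (9*(k:ℤ)+1+1+1) by omega))]
      rw [if_pos (show ¬ ((3:ℤ) ∣ (9*(k:ℤ)+1+1+1+1)) by omega)]
      rw [if_pos (show ¬ ((3:ℤ) ∣ (9*(k:ℤ)+1+1+1+1+1)) by omega)]
      rw [if_neg (not_not_intro (show (3:ℤ) ∣ (9*(k:ℤ)+1+1+1+1+1+1) by omega))]
      rw [if_pos (show ¬ ((3:ℤ) ∣ (9*(k:ℤ)+1+1+1+1+1+1+1)) by omega)]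
      rw [if_pos (show ¬ ((3:ℤ) ∣ (9*(k:ℤ)+1+1+1+1+1+1+1+1)) by omega)]
      rw [if_neg (not_not_intro (show (3:ℤ) ∣ (9*(k:ℤ)+1+1+1+1+1+1+1+1+1) by omega))]
      rw [if_pos (show ¬ ((3:ℤ) ∣ (9*(k:ℤ)+1+1+1+1+1+1+1+1+1+1)) by omega)]
      push_cast
      ring


theorem stmt_11 (m : ℤ) (hm : 0 < m) (hodd : Odd m) (hmod : m % 3 = 1) :
    (∀ s : ℤ, ¬ (3 ∣ s) → (3 : ℤ) ∣ (-s ^ 2 + 3 * m * s + m)) ∧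
    2 * ∑ s ∈ (Finset.Icc (0 : ℤ) ((3 * m - 1) / 2)).filter (fun s => ¬ (3 ∣ s)),
        ((3 : ℚ) + ((m : ℚ) * (1 + 3 * (s : ℚ)) - (s : ℚ) ^ 2) / 3)
      = (m : ℚ) ^ 3 + (2 * (m : ℚ) ^ 2) / 3 + (19 * (m : ℚ)) / 3 := by
  obtain ⟨t, ht⟩ := hodd
  constructor
  · intro s hs
    obtain ⟨q, hq⟩ : ∃ q, s = 3*q+1 ∨ s = 3*q+2 := ⟨s/3, by omega⟩
    obtain ⟨u, hu⟩ : ∃ u, m = 3*u+1 := ⟨m/3, by omega⟩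
    rcases hq with h | h
    · exact ⟨-3*q^2 - 2*q + 3*m*q + m + u, by rw [h, hu]; ring⟩
    · exact ⟨-3*q^2 - 4*q + 3*m*q + 2*m + u - 1, by rw [h, hu]; ring⟩
  · obtain ⟨k, hk⟩ : ∃ k : ℕ, m = 6*(k:ℤ)+1 := by
      refine ⟨((m-1)/6).toNat, ?_⟩
      have : m % 6 = 1 := by omega
      omega
    have hb : (3*m-1)/2 = 9*(k:ℤ)+1 := by omega
    rw [hb, Finset.sum_filter]
    have := aux (3 + (m:ℚ)/3) (m:ℚ) (-1/3) k
    rw [show (∑ s ∈ Finset.Icc (0:ℤ) (9*(k:ℤ)+1),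
        (if ¬ (3 ∣ s) then ((3:ℚ) + ((m : ℚ) * (1 + 3 * (s : ℚ)) - (s : ℚ) ^ 2) / 3) else 0))
        = ∑ s ∈ Finset.Icc (0:ℤ) (9*(k:ℤ)+1),
        (if ¬ (3 ∣ s) then ((3 + (m:ℚ)/3) + (m:ℚ)*(s:ℚ) + (-1/3)*(s:ℚ)^2) else 0) from
      Finset.sum_congr rfl (fun s _ => by split <;> [ring; rfl]), this]
    have hmk : (m:ℚ) = 6*(k:ℚ)+1 := by rw [hk]; push_cast; ring
    rw [hmk]; ring
end

section
/- Let m be a positive integer and p > 3 a prime. If p^2 (9m^3 + 6m^2 + 19m + 6) = 9m^3 + 6m^2 + 9mp^4 + 10mp^2 + 6p^4, then m = p. -/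
theorem stmt_18 (m : ℤ) (hm : 0 < m) (p : ℤ) (hp : Prime p) (hp3 : 3 < p)
    (h : p ^ 2 * (9 * m ^ 3 + 6 * m ^ 2 + 19 * m + 6)
        = 9 * m ^ 3 + 6 * m ^ 2 + 9 * m * p ^ 4 + 10 * m * p ^ 2 + 6 * p ^ 4) :
    m = p := by
  have key : (3 * m + 2) * (3 * ((m - p) * (m + p))) * (p ^ 2 - 1) = 0 := by ring_nf; linarith
  have h1 : (3 : ℤ) * m + 2 > 0 := by linarith
  have h2 : m + p > 0 := by linarith
  have h3 : p ^ 2 - 1 > 0 := by nlinarith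
  have : m - p = 0 := by
    rcases mul_eq_zero.1 key with hk | hk
    · rcases mul_eq_zero.1 hk with hk | hk
      · linarith
      · rcases mul_eq_zero.1 hk with hk | hk
        · linarith
        · rcases mul_eq_zero.1 hk with hk | hk
          · exact hk
          · linarith
    · linarith
  linarith
end
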